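/- arXiv:1810.08369 — 2 statements merged into one kernel-verified Lean document; each statement's English description precedes it below -/
import Mathlib

section
/- Let ν be any probability measure on ℝⁿ and let f : ℝⁿ → ℝ be a bounded Lipschitz function. Then for every r > 0, ∫|f − m_ν(f)| dν ≤ r·‖|∇f|‖_∞ + 2·α_ν(r)·Osc(f). -/
open MeasureTheory Real Set
open scoped ENNReal NNReal Pointwise

noncomputable section

/-- Euclidean space ℝⁿ. -/
abbrev Eucl (n : ℕ) := EuclideanSpace ℝ (Fin n)

/-- A measure `ν` on ℝⁿ is log-concave if `dν = e^{-V(x)} dx` for some convex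
`V : ℝⁿ → ℝ ∪ {+∞}`; equivalently, `ν` has a density `ρ = e^{-V}` w.r.t. Lebesgue
measure satisfying `ρ(a x + b y) ≥ ρ(x)^a ρ(y)^b` whenever `a, b ≥ 0`, `a + b = 1`. -/
def IsLogConcave {n : ℕ} (ν : Measure (Eucl n)) : Prop :=
  ∃ ρ : Eucl n → ℝ, (∀ x, 0 ≤ ρ x) ∧
    ν = volume.withDensity (fun x => ENNReal.ofReal (ρ x)) ∧
    ∀ x y : Eucl n, ∀ a b : ℝ, 0 ≤ a → 0 ≤ b → a + b = 1 →
      ρ x ^ a * ρ y ^ b ≤ ρ (a • x + b • y)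

/-- `m` is a median of `f` under `ν`. -/
def IsMedian {n : ℕ} (ν : Measure (Eucl n)) (f : Eucl n → ℝ) (m : ℝ) : Prop :=
  (1 : ℝ≥0∞) / 2 ≤ ν {x | f x ≤ m} ∧ (1 : ℝ≥0∞) / 2 ≤ ν {x | m ≤ f x}

/-- The Euclidean norm of the (a.e. defined) gradient of `f`. -/
def gradNorm {n : ℕ} (f : Eucl n → ℝ) (x : Eucl n) : ℝ := ‖fderiv ℝ f x‖

/-- The oscillation `sup f - inf f` of a function. -/
def oscil {n : ℕ} (f : Eucl n → ℝ) : ℝ := sSup (Set.range f) - sInf (Set.range f)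

/-- `f` is a bounded function. -/
def IsBoundedFun {n : ℕ} (f : Eucl n → ℝ) : Prop := ∃ M : ℝ, ∀ x, |f x| ≤ M

/-- Variance of `f` under `ν`. -/
def var {n : ℕ} (ν : Measure (Eucl n)) (f : Eucl n → ℝ) : ℝ :=
  ∫ x, (f x - ∫ y, f y ∂ν) ^ 2 ∂ν

/-- The concentration profile `α_ν(r)`. -/
def concProfile {n : ℕ} (ν : Measure (Eucl n)) (r : ℝ) : ℝ :=
  sSup {u : ℝ | ∃ A : Set (Eucl n), MeasurableSet A ∧ (1 : ℝ≥0∞) / 2 ≤ ν A ∧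
    u = 1 - (ν (A + Metric.closedBall 0 r)).toReal}

/-- The total variation distance `sup{|μ(f) - ν(f)| : 0 ≤ f ≤ 1 measurable}`. -/
def dTV {n : ℕ} (μ ν : Measure (Eucl n)) : ℝ :=
  sSup {d : ℝ | ∃ f : Eucl n → ℝ, Measurable f ∧ (∀ x, 0 ≤ f x ∧ f x ≤ 1) ∧
    d = |(∫ x, f x ∂μ) - ∫ x, f x ∂ν|}

/-- The Kantorovich-Rubinstein (Wasserstein-1) distance. -/
def W1 {n : ℕ} (ν μ : Measure (Eucl n)) : ℝ :=
  sSup {d : ℝ | ∃ f : Eucl n → ℝ, LipschitzWith 1 f ∧ d = (∫ x, f x ∂ν) - ∫ x, f x ∂μ}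

/-- The bounded-Lipschitz distance. -/
def dBL {n : ℕ} (μ ν : Measure (Eucl n)) : ℝ :=
  sSup {d : ℝ | ∃ f : Eucl n → ℝ, LipschitzWith 1 f ∧ (∀ x, |f x| ≤ 1) ∧
    d = (∫ x, f x ∂μ) - ∫ x, f x ∂ν}

/-- The Lévy-Prokhorov distance. -/
def dLP {n : ℕ} (μ ν : Measure (Eucl n)) : ℝ :=
  sInf {ε : ℝ | 0 ≤ ε ∧ ∀ A : Set (Eucl n), MeasurableSet A →
    μ A ≤ ν (A + Metric.closedBall 0 ε) + ENNReal.ofReal ε ∧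
    ν A ≤ μ (A + Metric.closedBall 0 ε) + ENNReal.ofReal ε}

/-- The relative entropy `D(ν||μ) = ∫ log(dν/dμ) dν` (for `ν ≪ μ`). -/
def relEntropy {n : ℕ} (ν μ : Measure (Eucl n)) : ℝ :=
  ∫ x, Real.log ((ν.rnDeriv μ x).toReal) ∂ν

/-- The standard Gaussian measure on ℝⁿ, with density `(2π)^{-n/2} e^{-|x|²/2}`. -/
def stdGaussian (n : ℕ) : Measure (Eucl n) :=
  volume.withDensity
    (fun x => ENNReal.ofReal ((2 * π) ^ (-(n : ℝ) / 2) * Real.exp (-‖x‖ ^ 2 / 2)))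

/-! Let `S` be the set of points within distance `r` of both `{f ≤ m}` and `{m ≤ f}`. On `S` the
Lipschitz bound gives `|f - m| ≤ K r`. Both sets have mass at least `1/2`, so each of their
`r`-enlargements misses mass at most `α_ν(r)`, whence `ν(Sᶜ) ≤ 2 α_ν(r)`; on `Sᶜ` we only use
`|f - m| ≤ Osc f`. -/

lemma LipschitzWith.exists_abs_sub_le_of_mem_add_closedBall {E : Type*} [SeminormedAddCommGroup E]
    {f : E → ℝ} {K : ℝ≥0} (hf : LipschitzWith K f) {s : Set E} {r : ℝ} {x : E}
    (hx : x ∈ s + Metric.closedBall 0 r) : ∃ y ∈ s, |f x - f y| ≤ K * r := by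
  obtain ⟨y, hy, z, hz, rfl⟩ := hx
  refine ⟨y, hy, ?_⟩
  calc |f (y + z) - f y| = dist (f (y + z)) (f y) := (Real.dist_eq _ _).symm
    _ ≤ K * dist (y + z) y := hf.dist_le_mul _ _
    _ ≤ K * r := by
      gcongr
      simpa [dist_eq_norm] using hz

lemma LipschitzWith.abs_sub_le_of_mem_inter_add_closedBall {E : Type*} [SeminormedAddCommGroup E]
    {f : E → ℝ} {K : ℝ≥0} (hf : LipschitzWith K f) {m r : ℝ} {x : E}
    (hx : x ∈ ({y | f y ≤ m} + Metric.closedBall 0 r) ∩ ({y | m ≤ f y} + Metric.closedBall 0 r)) :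
    |f x - m| ≤ K * r := by
  obtain ⟨a, ha, hxa⟩ := hf.exists_abs_sub_le_of_mem_add_closedBall hx.1
  obtain ⟨b, hb, hxb⟩ := hf.exists_abs_sub_le_of_mem_add_closedBall hx.2
  rw [Set.mem_ofPred_eq] at ha hb
  rw [abs_le] at hxa hxb ⊢
  constructor <;> linarith

lemma IsMedian.exists_le {n : ℕ} {ν : Measure (Eucl n)} {f : Eucl n → ℝ} {m : ℝ}
    (hm : IsMedian ν f m) : ∃ a, f a ≤ m := by
  by_contra! h
  have hempty : {x | f x ≤ m} = ∅ := Set.eq_empty_of_forall_notMem fun x hx => (h x).not_ge hx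
  simpa [hempty] using hm.1

lemma IsMedian.exists_ge {n : ℕ} {ν : Measure (Eucl n)} {f : Eucl n → ℝ} {m : ℝ}
    (hm : IsMedian ν f m) : ∃ b, m ≤ f b := by
  by_contra! h
  have hempty : {x | m ≤ f x} = ∅ := Set.eq_empty_of_forall_notMem fun x hx => (h x).not_ge hx
  simpa [hempty] using hm.2

lemma abs_sub_le_oscil {n : ℕ} {f : Eucl n → ℝ} (hf : IsBoundedFun f) {m : ℝ}
    (hlo : ∃ a, f a ≤ m) (hhi : ∃ b, m ≤ f b) (x : Eucl n) : |f x - m| ≤ oscil f := by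
  obtain ⟨M, hM⟩ := hf
  obtain ⟨a, ha⟩ := hlo
  obtain ⟨b, hb⟩ := hhi
  have hbddAbove : BddAbove (Set.range f) :=
    ⟨M, by rintro _ ⟨y, rfl⟩; exact (abs_le.1 (hM y)).2⟩
  have hbddBelow : BddBelow (Set.range f) :=
    ⟨-M, by rintro _ ⟨y, rfl⟩; exact (abs_le.1 (hM y)).1⟩
  have hx_le_sup := le_csSup hbddAbove ⟨x, rfl⟩
  have hb_le_sup := le_csSup hbddAbove ⟨b, rfl⟩
  have hinf_le_x := csInf_le hbddBelow ⟨x, rfl⟩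
  have hinf_le_a := csInf_le hbddBelow ⟨a, rfl⟩
  rw [oscil, abs_le]
  constructor <;> linarith

lemma IsClosed.add_closedBall_zero {E : Type*} [SeminormedAddCommGroup E] [ProperSpace E]
    {A : Set E} (hA : IsClosed A) (r : ℝ) : IsClosed (A + Metric.closedBall 0 r) :=
  hA.add_right_of_isCompact (isCompact_closedBall _ _)

lemma one_sub_measureReal_le_concProfile {n : ℕ} (ν : Measure (Eucl n)) (r : ℝ)
    {A : Set (Eucl n)} (hA : MeasurableSet A) (hνA : (1 : ℝ≥0∞) / 2 ≤ ν A) :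
    1 - ν.real (A + Metric.closedBall 0 r) ≤ concProfile ν r := by
  refine le_csSup ⟨1, ?_⟩ ⟨A, hA, hνA, rfl⟩
  rintro u ⟨B, -, -, rfl⟩
  linarith [ENNReal.toReal_nonneg (a := ν (B + Metric.closedBall 0 r))]

lemma measureReal_compl_inter_add_closedBall_le {n : ℕ} (ν : Measure (Eucl n))
    [IsProbabilityMeasure ν] (r : ℝ) {A B : Set (Eucl n)} (hA : IsClosed A) (hB : IsClosed B)
    (hνA : (1 : ℝ≥0∞) / 2 ≤ ν A) (hνB : (1 : ℝ≥0∞) / 2 ≤ ν B) :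
    ν.real ((A + Metric.closedBall 0 r) ∩ (B + Metric.closedBall 0 r))ᶜ ≤
      2 * concProfile ν r := by
  have hA' := (hA.add_closedBall_zero r).measurableSet
  have hB' := (hB.add_closedBall_zero r).measurableSet
  have := one_sub_measureReal_le_concProfile ν r hA.measurableSet hνA
  have := one_sub_measureReal_le_concProfile ν r hB.measurableSet hνB
  calc _ ≤ ν.real (A + Metric.closedBall 0 r)ᶜ + ν.real (B + Metric.closedBall 0 r)ᶜ := by
        rw [Set.compl_inter]
        exact measureReal_union_le _ _
    _ ≤ _ := by
      rw [measureReal_compl hA', measureReal_compl hB', probReal_univ]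
      linarith

lemma integral_le_add_mul_measureReal_compl {α : Type*} [MeasurableSpace α] {μ : Measure α}
    [IsProbabilityMeasure μ] {g : α → ℝ} (hg : AEStronglyMeasurable g μ) {S : Set α}
    (hS : MeasurableSet S) {c C : ℝ} (hc : 0 ≤ c) (hgS : ∀ x ∈ S, g x ≤ c)
    (hgC : ∀ x, |g x| ≤ C) :
    ∫ x, g x ∂μ ≤ c + C * μ.real Sᶜ := by
  have hint : Integrable g μ := .of_bound hg C (.of_forall hgC)
  rw [← integral_add_compl hS hint]
  gcongr
  · calc ∫ x in S, g x ∂μ ≤ ∫ _ in S, c ∂μ :=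
          setIntegral_mono_on hint.integrableOn (integrableOn_const (measure_ne_top μ S)) hS hgS
      _ = μ.real S * c := by rw [setIntegral_const, smul_eq_mul]
      _ ≤ c := mul_le_of_le_one_left hc measureReal_le_one
  · calc ∫ x in Sᶜ, g x ∂μ ≤ ∫ _ in Sᶜ, C ∂μ :=
          setIntegral_mono_on hint.integrableOn (integrableOn_const (measure_ne_top μ _)) hS.compl
            fun x _ => (le_abs_self _).trans (hgC x)
      _ = C * μ.real Sᶜ := by rw [setIntegral_const, smul_eq_mul, mul_comm]

theorem statement0 {n : ℕ} (ν : Measure (Eucl n)) [IsProbabilityMeasure ν]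
    (f : Eucl n → ℝ) (K : ℝ≥0) (hlip : LipschitzWith K f) (hbd : IsBoundedFun f)
    (m : ℝ) (hm : IsMedian ν f m) (r : ℝ) (hr : 0 < r) :
    ∫ x, |f x - m| ∂ν ≤ r * (K : ℝ) + 2 * concProfile ν r * oscil f := by
  have hosc : ∀ x, |f x - m| ≤ oscil f := abs_sub_le_oscil hbd hm.exists_le hm.exists_ge
  have hlo : IsClosed {x | f x ≤ m} := isClosed_le hlip.continuous continuous_const
  have hhi : IsClosed {x | m ≤ f x} := isClosed_le continuous_const hlip.continuous
  have hfar := measureReal_compl_inter_add_closedBall_le ν r hlo hhi hm.1 hm.2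
  have hnear := ((hlo.add_closedBall_zero r).inter (hhi.add_closedBall_zero r)).measurableSet
  calc ∫ x, |f x - m| ∂ν ≤ K * r + oscil f * ν.real _ :=
        integral_le_add_mul_measureReal_compl
          ((hlip.continuous.sub continuous_const).abs.aestronglyMeasurable) hnear
          (by positivity) (fun x hx => hlip.abs_sub_le_of_mem_inter_add_closedBall hx)
          (fun x => (abs_abs (f x - m)).trans_le (hosc x))
    _ ≤ r * K + 2 * concProfile ν r * oscil f := by
      have hosc_nonneg : 0 ≤ oscil f := (abs_nonneg _).trans (hosc 0)
      rw [mul_comm (K : ℝ) r, mul_comm (2 * _) (oscil f)]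
      gcongr
end
end

section
/- Let μ and ν be probability measures on ℝⁿ with finite first moments and W₁(ν,μ) < ∞. Fix s > 0 and β ≥ 0 and suppose that for every bounded Lipschitz function f, ∫|f − μ(f)| dμ ≤ β·‖|∇f|‖_∞ + s·Osc(f). Then for every bounded Lipschitz function f, ∫|f − ν(f)| dν ≤ (β + 2·W₁(ν,μ))·‖|∇f|‖_∞ + s·Osc(f). -/
open MeasureTheory Real Set
open scoped ENNReal NNReal Pointwise

noncomputable section

/-!
Write `μ(f)` and `ν(f)` for the means. Centring at `μ(f)` instead of `ν(f)` costs at most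
`|μ(f) - ν(f)|` in mean absolute deviation under `ν`. Both `|f - μ(f)|` and `f` are
`K`-Lipschitz, so after dividing by `K` the definition of `W₁` shows that each of `∫ |f - μ(f)| dν - ∫ |f - μ(f)| dμ`
and `|μ(f) - ν(f)|` is at most `K · W₁(ν, μ)`; the hypothesis on `μ` bounds the remaining term.
-/

theorem integral_abs_sub_integral_le_integral_abs_sub_add {α : Type*} [MeasurableSpace α]
    (ν : Measure α) [IsProbabilityMeasure ν] {f : α → ℝ} (hf : Integrable f ν) (c : ℝ) :
    ∫ x, |f x - ∫ y, f y ∂ν| ∂ν ≤ (∫ x, |f x - c| ∂ν) + |c - ∫ y, f y ∂ν| := by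
  have habs : ∀ d : ℝ, Integrable (fun x => |f x - d|) ν :=
    fun d => (hf.sub (integrable_const d)).abs
  calc ∫ x, |f x - ∫ y, f y ∂ν| ∂ν ≤ ∫ x, (|f x - c| + |c - ∫ y, f y ∂ν|) ∂ν :=
        integral_mono (habs _) ((habs c).add (integrable_const _)) fun x => abs_sub_le _ _ _
    _ = (∫ x, |f x - c| ∂ν) + |c - ∫ y, f y ∂ν| := by
        rw [integral_add (habs c) (integrable_const _)]
        simp

section Wasserstein

variable {n : ℕ} (μ ν : Measure (Eucl n))

theorem LipschitzWith.integral_sub_integral_le_mul_W1 [IsProbabilityMeasure μ]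
    [IsProbabilityMeasure ν]
    (hW : BddAbove {d : ℝ | ∃ f : Eucl n → ℝ, LipschitzWith 1 f ∧
      d = (∫ x, f x ∂ν) - ∫ x, f x ∂μ})
    {g : Eucl n → ℝ} {K : ℝ≥0} (hg : LipschitzWith K g) :
    (∫ x, g x ∂ν) - ∫ x, g x ∂μ ≤ K * W1 ν μ := by
  rcases eq_or_ne K 0 with rfl | hK
  · have hconst : g = fun _ => g 0 := funext fun x => (LipschitzWith.zero_iff g).mp hg x 0
    rw [hconst]
    simp
  · have hg₁ : LipschitzWith 1 (fun x => (K : ℝ)⁻¹ * g x) := by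
      simpa [inv_mul_cancel₀ hK, Function.comp_def] using
        (lipschitzWith_smul ((K : ℝ)⁻¹)).comp hg
    have hle : (K : ℝ)⁻¹ * ((∫ x, g x ∂ν) - ∫ x, g x ∂μ) ≤ W1 ν μ := by
      rw [mul_sub, ← integral_const_mul, ← integral_const_mul]
      exact le_csSup hW ⟨_, hg₁, rfl⟩
    rwa [inv_mul_le_iff₀ (by positivity)] at hle

theorem LipschitzWith.abs_integral_sub_integral_le_mul_W1 [IsProbabilityMeasure μ]
    [IsProbabilityMeasure ν]
    (hW : BddAbove {d : ℝ | ∃ f : Eucl n → ℝ, LipschitzWith 1 f ∧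
      d = (∫ x, f x ∂ν) - ∫ x, f x ∂μ})
    {g : Eucl n → ℝ} {K : ℝ≥0} (hg : LipschitzWith K g) :
    |(∫ x, g x ∂μ) - ∫ x, g x ∂ν| ≤ K * W1 ν μ := by
  have hneg := hg.neg.integral_sub_integral_le_mul_W1 μ ν hW
  simp only [Pi.neg_apply, integral_neg] at hneg
  exact abs_sub_le_iff.mpr ⟨by linarith, hg.integral_sub_integral_le_mul_W1 μ ν hW⟩

end Wasserstein

theorem statement14_general {n : ℕ} (μ ν : Measure (Eucl n)) [IsProbabilityMeasure μ]
    [IsProbabilityMeasure ν]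
    (hW : BddAbove {d : ℝ | ∃ f : Eucl n → ℝ, LipschitzWith 1 f ∧
      d = (∫ x, f x ∂ν) - ∫ x, f x ∂μ})
    (s β : ℝ)
    (H : ∀ (f : Eucl n → ℝ) (K : ℝ≥0), LipschitzWith K f → IsBoundedFun f →
      ∫ x, |f x - ∫ y, f y ∂μ| ∂μ ≤ β * (K : ℝ) + s * oscil f) :
    ∀ (f : Eucl n → ℝ) (K : ℝ≥0), LipschitzWith K f → IsBoundedFun f →
      ∫ x, |f x - ∫ y, f y ∂ν| ∂ν ≤ (β + 2 * W1 ν μ) * (K : ℝ) + s * oscil f := by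
  rintro f K hf ⟨M, hM⟩
  have hfν : Integrable f ν :=
    .of_bound hf.continuous.aestronglyMeasurable M (ae_of_all _ hM)
  have htransport := (LipschitzWith.dist_left (∫ y, f y ∂μ)).comp hf
    |>.integral_sub_integral_le_mul_W1 μ ν hW
  simp only [Function.comp_def, Real.dist_eq, one_mul] at htransport
  calc ∫ x, |f x - ∫ y, f y ∂ν| ∂ν
      ≤ (∫ x, |f x - ∫ y, f y ∂μ| ∂ν) + |(∫ y, f y ∂μ) - ∫ y, f y ∂ν| :=
        integral_abs_sub_integral_le_integral_abs_sub_add ν hfν _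
    _ ≤ ((∫ x, |f x - ∫ y, f y ∂μ| ∂μ) + K * W1 ν μ) + K * W1 ν μ := by
        gcongr
        · linarith
        · exact hf.abs_integral_sub_integral_le_mul_W1 μ ν hW
    _ ≤ (β + 2 * W1 ν μ) * K + s * oscil f := by
        linarith [H f K hf ⟨M, hM⟩]

theorem statement14 {n : ℕ} (μ ν : Measure (Eucl n)) [IsProbabilityMeasure μ]
    [IsProbabilityMeasure ν]
    (hμ1 : Integrable (fun x : Eucl n => ‖x‖) μ)
    (hν1 : Integrable (fun x : Eucl n => ‖x‖) ν)
    (hW : BddAbove {d : ℝ | ∃ f : Eucl n → ℝ, LipschitzWith 1 f ∧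
      d = (∫ x, f x ∂ν) - ∫ x, f x ∂μ})
    (s β : ℝ) (hs : 0 < s) (hβ : 0 ≤ β)
    (H : ∀ (f : Eucl n → ℝ) (K : ℝ≥0), LipschitzWith K f → IsBoundedFun f →
      ∫ x, |f x - ∫ y, f y ∂μ| ∂μ ≤ β * (K : ℝ) + s * oscil f) :
    ∀ (f : Eucl n → ℝ) (K : ℝ≥0), LipschitzWith K f → IsBoundedFun f →
      ∫ x, |f x - ∫ y, f y ∂ν| ∂ν ≤ (β + 2 * W1 ν μ) * (K : ℝ) + s * oscil f :=
  statement14_general μ ν hW s β H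
end
end
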